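/- Let D be a two-dimensional monodromy T-module with decomposition D = D⁽¹⁾ ⊕ D⁽²⁾ as above and j₀ the filtration index with F^{j₀}D free rank-1 and F^{j₀}D ∩ Ker(N) = 0. Then there exists a unique element L(D) ∈ T_K such that x − L(D)·N(x) ∈ F^{j₀}D for every x ∈ D⁽²⁾. -/

import Mathlib

/-!
Since `D` is finite-dimensional over `K`, it is an Artinian `K ⊗ T`-module. The line
`F = F^{j₀}D` meets `D⁽¹⁾ = Ker N` trivially, so its projection to `D⁽²⁾ ≅ F` along `D⁽¹⁾` is
injective, hence bijective: `F` is a second complement of `D⁽¹⁾`. Writing a generator `e` of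
`D⁽²⁾` as `e = N (c • e) + u` with `u ∈ F` gives `L(D) = c`. Uniqueness: a difference `L`
of two solutions has `L • N e ∈ F ∩ Ker N = 0`, so `L • e ∈ Ker N ∩ D⁽²⁾ = 0`, and `e` is free.
-/

open TensorProduct

/-- The canonical decomposition of a monodromy module (Lemma 2.3). -/
def MonodromyDecomp {R D : Type*} [CommRing R] [AddCommGroup D] [Module R D]
    (φ : D →+ D) (N : D →ₗ[R] D) (D1 D2 : Submodule R D) : Prop :=
  (∀ x ∈ D1, φ x ∈ D1) ∧ (∀ x ∈ D2, φ x ∈ D2) ∧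
  Module.Free R D1 ∧ Module.finrank R D1 = 1 ∧
  Module.Free R D2 ∧ Module.finrank R D2 = 1 ∧
  IsCompl D1 D2 ∧ (∀ x ∈ D2, N x ∈ D1) ∧ Set.BijOn ⇑N ↑D2 ↑D1

namespace Submodule

variable {R M : Type*} [CommRing R] [AddCommGroup M] [Module R M]

theorem exists_eq_span_singleton_of_linearEquiv {P : Submodule R M} (ψ : R ≃ₗ[R] P) :
    ∃ e : M, P = R ∙ e ∧ ∀ c : R, c • e = 0 → c = 0 := by
  have hψ : ∀ c : R, c • (ψ 1 : M) = ψ c := fun c => by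
    rw [← coe_smul, ← map_smul, smul_eq_mul, mul_one]
  refine ⟨ψ 1, ext fun x => ⟨fun hx => ?_, fun hx => ?_⟩, fun c hc => ?_⟩
  · exact mem_span_singleton.mpr ⟨ψ.symm ⟨x, hx⟩, by rw [hψ, LinearEquiv.apply_symm_apply]⟩
  · obtain ⟨c, rfl⟩ := mem_span_singleton.mp hx
    exact hψ c ▸ (ψ c).2
  · rw [hψ, ZeroMemClass.coe_eq_zero, LinearEquiv.map_eq_zero_iff] at hc
    exact hc

/-- Projecting `F` onto `D₂` along `D₁` is injective, hence surjective as `F ≃ D₂` is Artinian. -/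
theorem isCompl_of_disjoint_of_linearEquiv [IsArtinian R M] {D₁ D₂ F : Submodule R M}
    (h : IsCompl D₁ D₂) (hF : Disjoint D₁ F) (ψ : F ≃ₗ[R] D₂) : IsCompl D₁ F := by
  set π := D₂.projectionOnto D₁ h.symm
  have hinj : Function.Injective (π ∘ₗ F.subtype) := by
    rw [← LinearMap.ker_eq_bot, LinearMap.ker_eq_bot']
    intro x hx
    have hx₁ : (x : M) ∈ D₁ := (projectionOnto_apply_eq_zero_iff _).mp hx
    exact Subtype.ext (disjoint_def.mp hF _ hx₁ x.2)
  have hsurj : Function.Surjective (π ∘ₗ F.subtype) := by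
    have := IsArtinian.surjective_of_injective_endomorphism
      ((π ∘ₗ F.subtype) ∘ₗ ψ.symm.toLinearMap) (hinj.comp ψ.symm.injective)
    rw [LinearMap.coe_comp] at this
    exact this.of_comp
  refine ⟨hF, codisjoint_iff.mpr (eq_top_iff.mpr fun x _ => ?_)⟩
  obtain ⟨f, hf⟩ := hsurj (π x)
  have hxf : x - f ∈ D₁ := by
    rw [← projectionOnto_apply_eq_zero_iff h.symm, map_sub]
    exact sub_eq_zero.mpr hf.symm
  exact mem_sup.mpr ⟨x - f, hxf, f, f.2, sub_add_cancel x f⟩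

end Submodule

namespace LinearMap

variable {R M : Type*} [CommRing R] [AddCommGroup M] [Module R M]

theorem existsUnique_sub_smul_mem_of_isCompl {N : M →ₗ[R] M} {D₂ F : Submodule R M} {e : M}
    (hD₂ : D₂ = R ∙ e) (he : ∀ c : R, c • e = 0 → c = 0) (hdisj : Disjoint (ker N) D₂)
    (hN : D₂.map N = ker N) (hF : IsCompl (ker N) F) :
    ∃! L : R, ∀ x ∈ D₂, x - L • N x ∈ F := by
  subst hD₂
  have hNe : N e ∈ ker N := hN ▸ Submodule.mem_map_of_mem (Submodule.mem_span_singleton_self e)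
  obtain ⟨v, hv, u, hu, hvu⟩ :=
    Submodule.mem_sup.mp (hF.sup_eq_top ▸ Submodule.mem_top : e ∈ ker N ⊔ F)
  obtain ⟨y, hy, rfl⟩ := Submodule.mem_map.mp (hN ▸ hv)
  obtain ⟨c, rfl⟩ := Submodule.mem_span_singleton.mp hy
  have hcu : e - c • N e = u := by rw [sub_eq_iff_eq_add', ← map_smul, hvu]
  refine ⟨c, fun x hx => ?_, fun L hL => ?_⟩
  · obtain ⟨d, rfl⟩ := Submodule.mem_span_singleton.mp hx
    rw [map_smul, smul_comm c d, ← smul_sub, hcu]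
    exact F.smul_mem d hu
  · have hF' : (L - c) • N e ∈ F := by
      have := F.sub_mem (hcu ▸ hu) (hL e (Submodule.mem_span_singleton_self e))
      rwa [sub_sub_sub_cancel_left, ← sub_smul] at this
    have hker : (L - c) • N e = 0 :=
      Submodule.disjoint_def.mp hF.disjoint _ ((ker N).smul_mem _ hNe) hF'
    have h0 : (L - c) • e = 0 := Submodule.disjoint_def.mp hdisj _
      (by rwa [mem_ker, map_smul]) (Submodule.smul_mem _ _ (Submodule.mem_span_singleton_self e))
    exact sub_eq_zero.mp (he _ h0)

end LinearMap

theorem stmt4_general {p : ℕ} [Fact p.Prime]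
    {K : Type*} [Field K] [Algebra ℚ_[p] K]
    {T : Type*} [CommRing T] [Algebra ℚ_[p] T]
    {D : Type*} [AddCommGroup D] [Module (K ⊗[ℚ_[p]] T) D]
    [Module K D] [IsScalarTower K (K ⊗[ℚ_[p]] T) D] [FiniteDimensional K D]
    (φ : D →+ D)
    (N : D →ₗ[K ⊗[ℚ_[p]] T] D)
    (Fil : ℤ → Submodule (K ⊗[ℚ_[p]] T) D)
    (j₀ : ℤ) (hfree1 : Module.Free (K ⊗[ℚ_[p]] T) (Fil j₀))
    (hrank1 : Module.finrank (K ⊗[ℚ_[p]] T) (Fil j₀) = 1)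
    (hdisj : Fil j₀ ⊓ LinearMap.ker N = ⊥)
    (D1 D2 : Submodule (K ⊗[ℚ_[p]] T) D)
    (hdecomp : MonodromyDecomp φ N D1 D2)
    (hD1 : D1 = LinearMap.ker N) :
    ∃! L : K ⊗[ℚ_[p]] T, ∀ x ∈ D2, x - L • N x ∈ Fil j₀ := by
  obtain ⟨-, -, -, -, hfree₂, hrank₂, hcompl, -, hbij⟩ := hdecomp
  subst hD1
  rcases subsingleton_or_nontrivial (K ⊗[ℚ_[p]] T) with _ | _
  · have := Module.subsingleton (K ⊗[ℚ_[p]] T) D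
    exact ⟨0, fun x _ => by simp [Subsingleton.elim x 0], fun L _ => Subsingleton.elim L 0⟩
  have : IsArtinian (K ⊗[ℚ_[p]] T) D := isArtinian_of_tower K inferInstance
  obtain ⟨ψ₁⟩ := Module.nonempty_linearEquiv_of_finrank_eq_one hrank1
  obtain ⟨ψ₂⟩ := Module.nonempty_linearEquiv_of_finrank_eq_one hrank₂
  obtain ⟨e, hD2, he⟩ := D2.exists_eq_span_singleton_of_linearEquiv ψ₂
  have hF := Submodule.isCompl_of_disjoint_of_linearEquiv hcompl (disjoint_iff.mpr hdisj).symm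
    (ψ₁.symm.trans ψ₂)
  exact LinearMap.existsUnique_sub_smul_mem_of_isCompl hD2 he hcompl.disjoint
    (SetLike.coe_injective (by rw [Submodule.map_coe]; exact hbij.image_eq)) hF

/-- For a two-dimensional monodromy `T`-module `D` with canonical decomposition
`D = D⁽¹⁾ ⊕ D⁽²⁾` (`D⁽¹⁾ = Ker N`) and filtration index `j₀` such that `F^{j₀}D` is free of
rank one with `F^{j₀}D ∩ Ker N = 0`, there is a unique `L(D) ∈ T_K` such that
`x − L(D)·N(x) ∈ F^{j₀}D` for every `x ∈ D⁽²⁾`. -/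
theorem stmt4 {p : ℕ} [Fact p.Prime]
    {K : Type*} [Field K] [Algebra ℚ_[p] K] (σ : K ≃+* K)
    {T : Type*} [CommRing T] [Algebra ℚ_[p] T]
      [FiniteDimensional ℚ_[p] T] [IsSemisimpleRing T]
    {D : Type*} [AddCommGroup D] [Module (K ⊗[ℚ_[p]] T) D]
    [Module K D] [IsScalarTower K (K ⊗[ℚ_[p]] T) D] [FiniteDimensional K D]
    (φ : D →+ D) (hφbij : Function.Bijective φ)
    (hφσ : ∀ (c : K) (x : D), φ (c • x) = σ c • φ x)
    (hφT : ∀ (t : T) (x : D), φ (((1 : K) ⊗ₜ[ℚ_[p]] t) • x) = ((1 : K) ⊗ₜ[ℚ_[p]] t) • φ x)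
    (N : D →ₗ[K ⊗[ℚ_[p]] T] D)
    (hNφ : ∀ x, N (φ x) = (algebraMap ℚ_[p] K (p : ℚ_[p])) • φ (N x))
    (Fil : ℤ → Submodule (K ⊗[ℚ_[p]] T) D)
    (hfil : Antitone Fil) (hexh : ∃ i, Fil i = ⊤) (hsep : ∃ i, Fil i = ⊥)
    (hfree2 : Module.Free (K ⊗[ℚ_[p]] T) D)
    (hrank2 : Module.finrank (K ⊗[ℚ_[p]] T) D = 2)
    (hexact : LinearMap.range N = LinearMap.ker N)
    (j₀ : ℤ) (hfree1 : Module.Free (K ⊗[ℚ_[p]] T) (Fil j₀))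
    (hrank1 : Module.finrank (K ⊗[ℚ_[p]] T) (Fil j₀) = 1)
    (hdisj : Fil j₀ ⊓ LinearMap.ker N = ⊥)
    (D1 D2 : Submodule (K ⊗[ℚ_[p]] T) D)
    (hdecomp : MonodromyDecomp φ N D1 D2)
    (hD1 : D1 = LinearMap.ker N) :
    ∃! L : K ⊗[ℚ_[p]] T, ∀ x ∈ D2, x - L • N x ∈ Fil j₀ :=
  stmt4_general φ N Fil j₀ hfree1 hrank1 hdisj D1 D2 hdecomp hD1
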